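/- (Quaternion matrix least squares) Let A ∈ ℍ^{R×N}, B ∈ ℍ^{S×P}, C ∈ ℍ^{R×P} be fixed and define the real-valued cost F(Q) = Tr((C − AQB)^H (C − AQB)) for Q ∈ ℍ^{N×S}. Then the conjugate GHR gradient satisfies ∂F/∂Q* = −½ A^H (C − AQB) B^H at every Q; consequently Q is a stationary point of F if and only if it satisfies the normal equation A^H A Q B B^H = A^H C B^H, and if A^H A and B B^H are invertible the unique stationary point is Q = (A^H A)⁻¹ A^H C B^H (B B^H)⁻¹. -/

import Mathlib

open scoped Quaternion
open Matrix

noncomputable section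

/-- The imaginary unit `i` of the quaternions. -/
def qI : ℍ[ℝ] := ⟨0, 1, 0, 0⟩
/-- The imaginary unit `j` of the quaternions. -/
def qJ : ℍ[ℝ] := ⟨0, 0, 1, 0⟩
/-- The imaginary unit `k` of the quaternions. -/
def qK : ℍ[ℝ] := ⟨0, 0, 0, 1⟩

/-- The `N × S` quaternion matrix with entry `d` at position `(n,s)` and `0` elsewhere. -/
def single {N S : ℕ} (n : Fin N) (s : Fin S) (d : ℍ[ℝ]) : Fin N → Fin S → ℍ[ℝ] :=
  Pi.single n (Pi.single s d)

/-- Real directional (Fréchet) derivative of a scalar function of a matrix variable, in the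
direction `d` at the single entry `(n,s)` (the other entries held fixed). -/
def pd {N S : ℕ} (f : (Fin N → Fin S → ℍ[ℝ]) → ℍ[ℝ]) (Q : Fin N → Fin S → ℍ[ℝ])
    (n : Fin N) (s : Fin S) (d : ℍ[ℝ]) : ℍ[ℝ] :=
  fderiv ℝ f Q (_root_.single n s d)

/-- Conjugate left GHR derivative `∂f/∂q_{ns}*` of a scalar function `f` with respect to the
entry `q_{ns}` of its matrix argument:
`¼(∂f/∂q_a + (∂f/∂q_b) i + (∂f/∂q_c) j + (∂f/∂q_d) k)`. -/
def ghrEStar {N S : ℕ} (f : (Fin N → Fin S → ℍ[ℝ]) → ℍ[ℝ])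
    (Q : Fin N → Fin S → ℍ[ℝ]) (n : Fin N) (s : Fin S) : ℍ[ℝ] :=
  (1 / 4 : ℝ) • (pd f Q n s 1 + pd f Q n s qI * qI + pd f Q n s qJ * qJ + pd f Q n s qK * qK)

/-- The matrix least-squares cost `F(Q) = Tr((C − AQB)^H (C − AQB))`. -/
def lsCost {R N S P : ℕ} (A : Matrix (Fin R) (Fin N) ℍ[ℝ]) (B : Matrix (Fin S) (Fin P) ℍ[ℝ])
    (C : Matrix (Fin R) (Fin P) ℍ[ℝ]) (Q : Fin N → Fin S → ℍ[ℝ]) : ℍ[ℝ] :=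
  ((C - A * Matrix.of Q * B)ᴴ * (C - A * Matrix.of Q * B)).trace

/-! On the direction `d` at entry `(n,s)`, the differential of `F(Q) = Tr(RᴴR)`, `R = C − AQB`, is
`−2 Re Tr(Rᴴ A E B)` with `E` the matrix unit carrying `d`; since `Re Tr` is cyclic this is
`Re(W d)` with `W = −2 ((Aᴴ R Bᴴ)_{ns})*`. For any `W`, `Σ_{e ∈ {1,i,j,k}} Re(W e) e = W*`, so the
GHR derivative is `¼ W* = −½ (Aᴴ R Bᴴ)_{ns}`. It vanishes iff `Aᴴ R Bᴴ = 0`, which is the normal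
equation, and invertibility of `AᴴA` and `BBᴴ` lets one cancel them. -/

instance : StarModule ℝ ℍ[ℝ] := ⟨fun r a => by rw [Quaternion.star_smul, star_trivial r]⟩

namespace Quaternion

theorem re_sum {ι : Type*} (s : Finset ι) (f : ι → ℍ[ℝ]) :
    (∑ i ∈ s, f i).re = ∑ i ∈ s, (f i).re :=
  map_sum (QuaternionAlgebra.reₗ (-1) 0 (-1)) f s

theorem re_mul_comm (a b : ℍ[ℝ]) : (a * b).re = (b * a).re := by
  simp only [re_mul]; ring

theorem coe_neg_one_half : ((-(1 / 2) : ℝ) : ℍ[ℝ]) = -(1 / 2) := by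
  rw [coe_neg, coe_div, coe_one]
  rfl

theorem re_mul_basis_sum (w : ℍ[ℝ]) :
    ((w * 1).re : ℍ[ℝ]) + ((w * qI).re : ℍ[ℝ]) * qI + ((w * qJ).re : ℍ[ℝ]) * qJ
      + ((w * qK).re : ℍ[ℝ]) * qK = star w := by
  ext <;> simp [re_mul, imI_mul, imJ_mul, imK_mul] <;> simp [qI, qJ, qK]

end Quaternion

theorem ghrEStar_eq_of_pd_eq_re {N S : ℕ} {f : (Fin N → Fin S → ℍ[ℝ]) → ℍ[ℝ]}
    {Q : Fin N → Fin S → ℍ[ℝ]} {n : Fin N} {s : Fin S} (W : ℍ[ℝ])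
    (h : ∀ d, pd f Q n s d = ((W * d).re : ℍ[ℝ])) :
    ghrEStar f Q n s = (1 / 4 : ℝ) • star W := by
  rw [ghrEStar, h, h, h, h, Quaternion.re_mul_basis_sum]

namespace Matrix

variable {l m n : Type*} [Fintype l] [Fintype m] [Fintype n]

theorem re_trace_mul_comm (X : Matrix m n ℍ[ℝ]) (Y : Matrix n m ℍ[ℝ]) :
    (X * Y).trace.re = (Y * X).trace.re := by
  simp only [trace, diag, mul_apply, Quaternion.re_sum]
  rw [Finset.sum_comm]
  simp only [Quaternion.re_mul_comm]

theorem trace_mul_of_single {N S : ℕ} (Y : Matrix (Fin S) (Fin N) ℍ[ℝ]) (n : Fin N) (s : Fin S)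
    (d : ℍ[ℝ]) : (Y * of (_root_.single n s d)).trace = Y s n * d := by
  simp [trace, mul_apply, _root_.single, Pi.single_apply, ite_apply]

theorem trace_conjTranspose_mul_self_sub_smul (M K : Matrix m n ℍ[ℝ]) (t : ℝ) :
    ((M - t • K)ᴴ * (M - t • K)).trace
      = (Mᴴ * M).trace - t • ((2 * (Mᴴ * K).trace.re : ℝ) : ℍ[ℝ]) + t ^ 2 • (Kᴴ * K).trace := by
  have hcross : (Kᴴ * M).trace + (Mᴴ * K).trace = ((2 * (Mᴴ * K).trace.re : ℝ) : ℍ[ℝ]) := by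
    rw [← Quaternion.star_add_self', ← trace_conjTranspose, conjTranspose_mul,
      conjTranspose_conjTranspose]
  rw [← hcross, conjTranspose_sub, conjTranspose_smul, star_trivial]
  simp only [Matrix.sub_mul, Matrix.mul_sub, smul_mul, Matrix.mul_smul, trace_sub, trace_smul]
  module

theorem mul_mul_eq_iff_eq_mul_mul {α : Type*} [Semiring α] [DecidableEq l] [DecidableEq m]
    {X XI : Matrix l l α} {Y YI : Matrix m m α} (hX : XI * X = 1) (hX' : X * XI = 1)
    (hY : Y * YI = 1) (hY' : YI * Y = 1) (Q Z : Matrix l m α) :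
    X * Q * Y = Z ↔ Q = XI * Z * YI := by
  constructor
  · rintro rfl
    simp only [Matrix.mul_assoc, hY, Matrix.mul_one, ← Matrix.mul_assoc XI, hX, Matrix.one_mul]
  · rintro rfl
    simp only [Matrix.mul_assoc, hY', Matrix.mul_one, ← Matrix.mul_assoc X, hX', Matrix.one_mul]

end Matrix

section LeastSquares

open Matrix

variable {R N S P : ℕ} (A : Matrix (Fin R) (Fin N) ℍ[ℝ]) (B : Matrix (Fin S) (Fin P) ℍ[ℝ])
  (C : Matrix (Fin R) (Fin P) ℍ[ℝ])

theorem differentiable_lsCost : Differentiable ℝ (lsCost A B C) := by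
  unfold lsCost
  simp only [trace, diag, mul_apply, Matrix.sub_apply, conjTranspose_apply, of_apply]
  fun_prop

theorem lsCost_add_smul (Q H : Fin N → Fin S → ℍ[ℝ]) (t : ℝ) :
    lsCost A B C (Q + t • H) = lsCost A B C Q
      - t • ((2 * ((C - A * of Q * B)ᴴ * (A * of H * B)).trace.re : ℝ) : ℍ[ℝ])
      + t ^ 2 • ((A * of H * B)ᴴ * (A * of H * B)).trace := by
  have hres : C - A * of (Q + t • H) * B = (C - A * of Q * B) - t • (A * of H * B) := by
    rw [show of (Q + t • H) = of Q + t • of H from rfl, Matrix.mul_add, Matrix.add_mul,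
      Matrix.mul_smul, smul_mul]
    abel
  rw [lsCost, hres, trace_conjTranspose_mul_self_sub_smul]
  rfl

theorem hasLineDerivAt_lsCost (Q H : Fin N → Fin S → ℍ[ℝ]) :
    HasLineDerivAt ℝ (lsCost A B C)
      ((-(2 * ((C - A * of Q * B)ᴴ * (A * of H * B)).trace.re) : ℝ) : ℍ[ℝ]) Q H := by
  unfold HasLineDerivAt
  rw [funext (lsCost_add_smul A B C Q H)]
  convert (((hasDerivAt_id (0 : ℝ)).smul_const
    ((2 * ((C - A * of Q * B)ᴴ * (A * of H * B)).trace.re : ℝ) : ℍ[ℝ])).const_sub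
      (lsCost A B C Q)).add
    ((hasDerivAt_pow 2 (0 : ℝ)).smul_const ((A * of H * B)ᴴ * (A * of H * B)).trace) using 1
  · rfl
  · simp

theorem pd_lsCost (Q : Fin N → Fin S → ℍ[ℝ]) (n : Fin N) (s : Fin S) (d : ℍ[ℝ]) :
    pd (lsCost A B C) Q n s d
      = ((((-2 : ℝ) • star ((Aᴴ * (C - A * of Q * B) * Bᴴ) n s)) * d).re : ℍ[ℝ]) := by
  rw [pd, ← (differentiable_lsCost A B C Q).lineDeriv_eq_fderiv,
    (hasLineDerivAt_lsCost A B C Q _).lineDeriv]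
  have htrace : ((C - A * of Q * B)ᴴ * (A * of (_root_.single n s d) * B)).trace.re
      = (star ((Aᴴ * (C - A * of Q * B) * Bᴴ) n s) * d).re := by
    rw [← Matrix.mul_assoc, ← Matrix.mul_assoc, re_trace_mul_comm, ← Matrix.mul_assoc,
      ← Matrix.mul_assoc, trace_mul_of_single, ← conjTranspose_apply, conjTranspose_mul,
      conjTranspose_mul, conjTranspose_conjTranspose, conjTranspose_conjTranspose,
      Matrix.mul_assoc]
  rw [htrace, smul_mul_assoc, Quaternion.re_smul, smul_eq_mul, neg_mul]

theorem ghrEStar_lsCost (Q : Fin N → Fin S → ℍ[ℝ]) (n : Fin N) (s : Fin S) :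
    ghrEStar (lsCost A B C) Q n s = -(1 / 2 : ℍ[ℝ]) * (Aᴴ * (C - A * of Q * B) * Bᴴ) n s := by
  rw [ghrEStar_eq_of_pd_eq_re _ (pd_lsCost A B C Q n s), star_smul, star_trivial, star_star,
    smul_smul, ← Quaternion.coe_neg_one_half, Quaternion.coe_mul_eq_smul]
  norm_num

theorem ghrEStar_lsCost_eq_zero_iff (Q : Fin N → Fin S → ℍ[ℝ]) :
    (fun n s => ghrEStar (lsCost A B C) Q n s) = (fun _ _ => 0) ↔
      Aᴴ * A * of Q * (B * Bᴴ) = Aᴴ * C * Bᴴ := by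
  have hhalf : -(1 / 2 : ℍ[ℝ]) ≠ 0 := by
    rw [← Quaternion.coe_neg_one_half, ← Quaternion.coe_zero, Ne, Quaternion.coe_inj]
    norm_num
  have hgrad : (fun n s => ghrEStar (lsCost A B C) Q n s)
      = of.symm (-(1 / 2 : ℍ[ℝ]) • (Aᴴ * (C - A * of Q * B) * Bᴴ)) :=
    funext₂ (ghrEStar_lsCost A B C Q)
  rw [hgrad, show (fun _ _ => 0 : Fin N → Fin S → ℍ[ℝ]) = of.symm 0 from rfl,
    of.symm.apply_eq_iff_eq,
    smul_eq_zero, or_iff_right hhalf, Matrix.mul_sub, Matrix.sub_mul, sub_eq_zero, eq_comm]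
  simp only [Matrix.mul_assoc]

end LeastSquares

/-- **Quaternion matrix least squares**: the conjugate GHR gradient of
`F(Q) = Tr((C − AQB)^H (C − AQB))` is `∂F/∂Q* = −½ A^H (C − AQB) B^H`; consequently `Q` is a
stationary point (the gradient vanishes) iff `A^H A Q B B^H = A^H C B^H`, and when
`A^H A` and `B B^H` are invertible the unique stationary point is
`Q = (A^H A)⁻¹ A^H C B^H (B B^H)⁻¹`. -/
theorem quaternion_matrix_least_squares {R N S P : ℕ}
    (A : Matrix (Fin R) (Fin N) ℍ[ℝ]) (B : Matrix (Fin S) (Fin P) ℍ[ℝ])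
    (C : Matrix (Fin R) (Fin P) ℍ[ℝ]) :
    (∀ Q : Fin N → Fin S → ℍ[ℝ],
      (fun (n : Fin N) (s : Fin S) => ghrEStar (lsCost A B C) Q n s) =
        fun (n : Fin N) (s : Fin S) =>
          -(1 / 2 : ℍ[ℝ]) * ((Aᴴ * (C - A * Matrix.of Q * B) * Bᴴ) n s))
    ∧ (∀ Q : Fin N → Fin S → ℍ[ℝ],
      ((fun (n : Fin N) (s : Fin S) => ghrEStar (lsCost A B C) Q n s) = (fun _ _ => 0) ↔
        Aᴴ * A * Matrix.of Q * (B * Bᴴ) = Aᴴ * C * Bᴴ))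
    ∧ (∀ (AI : Matrix (Fin N) (Fin N) ℍ[ℝ]) (BI : Matrix (Fin S) (Fin S) ℍ[ℝ]),
        AI * (Aᴴ * A) = 1 → (Aᴴ * A) * AI = 1 → BI * (B * Bᴴ) = 1 → (B * Bᴴ) * BI = 1 →
        ∀ Q : Fin N → Fin S → ℍ[ℝ],
          ((fun (n : Fin N) (s : Fin S) => ghrEStar (lsCost A B C) Q n s) = (fun _ _ => 0) ↔
            Matrix.of Q = AI * Aᴴ * C * Bᴴ * BI)) := by
  refine ⟨fun Q => funext₂ (ghrEStar_lsCost A B C Q), ghrEStar_lsCost_eq_zero_iff A B C, ?_⟩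
  intro AI BI hA hA' hB hB' Q
  rw [ghrEStar_lsCost_eq_zero_iff, mul_mul_eq_iff_eq_mul_mul hA hA' hB' hB]
  simp only [Matrix.mul_assoc]
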